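/- For any finite families of operators A_t and B_t on finite-dimensional Hilbert spaces, the operator norm of the sum of tensor products satisfies ‖∑_t A_t ⊗ B_t†‖ ≤ sqrt(‖∑_t A_t† A_t‖) · sqrt(‖∑_t B_t† B_t‖), where ‖·‖ denotes the operator (spectral) norm. -/

import Mathlib

open scoped Kronecker Matrix Matrix.Norms.L2Operator

/-!
Since `A ⊗ B† = (1 ⊗ B†) (A ⊗ 1)`, the sum is a block row `X = [1 ⊗ B_t†]_t` times a block
column `Y = [A_t ⊗ 1]_t`, with `X Xᴴ = 1 ⊗ ∑ B_t† B_t` and `Yᴴ Y = (∑ A_t† A_t) ⊗ 1`.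
The C⋆-identity gives `‖X‖ = √‖X Xᴴ‖` and `‖Y‖ = √‖Yᴴ Y‖`, and the maps `A ↦ A ⊗ 1`,
`B ↦ 1 ⊗ B` are ⋆-homomorphisms of C⋆-algebras, hence contractive.
-/

namespace Matrix

section Blocks

variable {ι a b c R : Type*}

def blockRow (M : ι → Matrix a b R) : Matrix a (ι × b) R :=
  of fun p q => M q.1 p q.2

def blockCol (N : ι → Matrix b c R) : Matrix (ι × b) c R :=
  of fun p q => N p.1 p.2 q

theorem blockRow_mul_blockCol [Fintype ι] [Fintype b] [NonUnitalNonAssocSemiring R]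
    (M : ι → Matrix a b R) (N : ι → Matrix b c R) :
    blockRow M * blockCol N = ∑ i, M i * N i := by
  ext p q
  simp only [mul_apply, Fintype.sum_prod_type, sum_apply]
  rfl

theorem conjTranspose_blockRow [Star R] (M : ι → Matrix a b R) :
    (blockRow M)ᴴ = blockCol fun i => (M i)ᴴ :=
  rfl

theorem conjTranspose_blockCol [Star R] (N : ι → Matrix b c R) :
    (blockCol N)ᴴ = blockRow fun i => (N i)ᴴ :=
  rfl

end Blocks

section CauchySchwarz

variable {ι a b c 𝕜 : Type*} [RCLike 𝕜] [Fintype ι] [Fintype a] [Fintype b] [Fintype c]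
  [DecidableEq b]

theorem l2_opNorm_eq_sqrt_conjTranspose_mul_self (X : Matrix a b 𝕜) : ‖X‖ = √‖Xᴴ * X‖ := by
  rw [l2_opNorm_conjTranspose_mul_self, Real.sqrt_mul_self (norm_nonneg X)]

theorem l2_opNorm_eq_sqrt_mul_conjTranspose_self [DecidableEq a] (X : Matrix a b 𝕜) :
    ‖X‖ = √‖X * Xᴴ‖ := by
  rw [← l2_opNorm_conjTranspose X, l2_opNorm_eq_sqrt_conjTranspose_mul_self,
    conjTranspose_conjTranspose]

theorem l2_opNorm_sum_mul_le [DecidableEq ι] [DecidableEq a] [DecidableEq c]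
    (M : ι → Matrix a b 𝕜) (N : ι → Matrix b c 𝕜) :
    ‖∑ i, M i * N i‖ ≤ √‖∑ i, M i * (M i)ᴴ‖ * √‖∑ i, (N i)ᴴ * N i‖ := by
  rw [← blockRow_mul_blockCol, ← blockRow_mul_blockCol, ← blockRow_mul_blockCol,
    ← conjTranspose_blockRow, ← conjTranspose_blockCol,
    ← l2_opNorm_eq_sqrt_mul_conjTranspose_self, ← l2_opNorm_eq_sqrt_conjTranspose_mul_self]
  exact l2_opNorm_mul _ _

end CauchySchwarz

section KroneckerStarAlgHom

variable {R n m : Type*} [CommSemiring R] [StarRing R] [Fintype n] [Fintype m]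
  [DecidableEq n] [DecidableEq m]

@[simps]
def kroneckerOneStarAlgHom : Matrix n n R →⋆ₐ[R] Matrix (n × m) (n × m) R where
  toFun A := A ⊗ₖ 1
  map_one' := one_kronecker_one
  map_mul' A B := by rw [← mul_kronecker_mul, mul_one]
  map_zero' := zero_kronecker _
  map_add' A B := add_kronecker _ _ _
  commutes' r := by
    rw [Algebra.algebraMap_eq_smul_one, Algebra.algebraMap_eq_smul_one, smul_kronecker,
      one_kronecker_one]
  map_star' A := by simp [star_eq_conjTranspose, conjTranspose_kronecker]

@[simps]
def oneKroneckerStarAlgHom : Matrix m m R →⋆ₐ[R] Matrix (n × m) (n × m) R where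
  toFun B := 1 ⊗ₖ B
  map_one' := one_kronecker_one
  map_mul' A B := by rw [← mul_kronecker_mul, mul_one]
  map_zero' := kronecker_zero _
  map_add' A B := kronecker_add _ _ _
  commutes' r := by
    rw [Algebra.algebraMap_eq_smul_one, Algebra.algebraMap_eq_smul_one, kronecker_smul,
      one_kronecker_one]
  map_star' A := by simp [star_eq_conjTranspose, conjTranspose_kronecker]

end KroneckerStarAlgHom

end Matrix

/-- Matrix Cauchy–Schwarz (Jocić): `‖∑ t, A t ⊗ₖ (B t)ᴴ‖ ≤ √‖∑ AᴴA‖ · √‖∑ BᴴB‖`,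
where `‖·‖` is the L2 operator (spectral) norm. -/
theorem matrix_cauchy_schwarz_kronecker {n m T : ℕ}
    (A : Fin T → Matrix (Fin n) (Fin n) ℂ)
    (B : Fin T → Matrix (Fin m) (Fin m) ℂ) :
    ‖∑ t, (A t) ⊗ₖ (B t)ᴴ‖ ≤
      Real.sqrt ‖∑ t, (A t)ᴴ * A t‖ * Real.sqrt ‖∑ t, (B t)ᴴ * B t‖ := by
  let φ : Matrix (Fin n) (Fin n) ℂ →⋆ₐ[ℂ] _ := Matrix.kroneckerOneStarAlgHom (m := Fin m)
  let ψ : Matrix (Fin m) (Fin m) ℂ →⋆ₐ[ℂ] _ := Matrix.oneKroneckerStarAlgHom (n := Fin n)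
  have hsplit (t : Fin T) : A t ⊗ₖ (B t)ᴴ = ψ (B t)ᴴ * φ (A t) := by
    rw [Matrix.oneKroneckerStarAlgHom_apply, Matrix.kroneckerOneStarAlgHom_apply,
      ← Matrix.mul_kronecker_mul, one_mul, mul_one]
  have hψ : ∑ t, ψ (B t)ᴴ * (ψ (B t)ᴴ)ᴴ = ψ (∑ t, (B t)ᴴ * B t) := by
    simp only [← Matrix.star_eq_conjTranspose, ← map_star, star_star, ← map_mul, ← map_sum]
  have hφ : ∑ t, (φ (A t))ᴴ * φ (A t) = φ (∑ t, (A t)ᴴ * A t) := by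
    simp only [← Matrix.star_eq_conjTranspose, ← map_star, ← map_mul, ← map_sum]
  simp only [hsplit]
  refine (Matrix.l2_opNorm_sum_mul_le _ _).trans ?_
  rw [hψ, hφ, mul_comm]
  gcongr <;> exact NonUnitalStarAlgHom.norm_apply_le _ _
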